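/- Let S be a partial plane spread in PG(6,2) of size 16, let N be its set of holes (so #N = 15), let n = dim⟨N⟩, and for i ≥ 0 let a_i be the number of hyperplanes of V containing exactly i blocks of S. Then n ∈ {4,5,6,7}, a_0 = 2^(7−n) − 1 (the number of hyperplanes containing ⟨N⟩), a_1 = 21 − 3·a_0, a_2 = 99 + 3·a_0, a_3 = 7 − a_0, and a_i = 0 for all i ≥ 4. -/

import Mathlib

open Module

abbrev V2 : Type := Fin 7 → ZMod 2

/-- A partial plane spread in PG(6,2): a set of 3-dimensional subspaces of `V2 = F₂⁷`
(the blocks) any two distinct members of which intersect trivially. -/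
def IsPPS (S : Set (Submodule (ZMod 2) V2)) : Prop :=
  (∀ B ∈ S, finrank (ZMod 2) ↥B = 3) ∧
    ∀ B₁ ∈ S, ∀ B₂ ∈ S, B₁ ≠ B₂ → B₁ ⊓ B₂ = ⊥

/-- A point (1-dimensional subspace) of `V2` is a hole of `S` if it is contained
in no block of `S`. -/
def IsHole (S : Set (Submodule (ZMod 2) V2)) (P : Submodule (ZMod 2) V2) : Prop :=
  finrank (ZMod 2) ↥P = 1 ∧ ∀ B ∈ S, ¬ P ≤ B

/-- The number of holes of `S` contained in the subspace `X`. -/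
noncomputable def holeCount (S : Set (Submodule (ZMod 2) V2))
    (X : Submodule (ZMod 2) V2) : ℕ :=
  {P | IsHole S P ∧ P ≤ X}.ncard

/-- The span `⟨N⟩` of the set of holes of `S`. -/
noncomputable def holeSpan (S : Set (Submodule (ZMod 2) V2)) : Submodule (ZMod 2) V2 :=
  sSup {P | IsHole S P}

/-- The number of blocks of `S` contained in the subspace `H`. -/
noncomputable def blocksIn (S : Set (Submodule (ZMod 2) V2))
    (H : Submodule (ZMod 2) V2) : ℕ :=
  {B ∈ S | B ≤ H}.ncard

/-- `spec S i` = the number of hyperplanes of `V2` containing exactly `i` blocks of `S`. -/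
noncomputable def spec (S : Set (Submodule (ZMod 2) V2)) (i : ℕ) : ℕ :=
  {H : Submodule (ZMod 2) V2 | finrank (ZMod 2) ↥H = 6 ∧ blocksIn S H = i}.ncard

/-!
Every point of `V2` is a hole or lies in exactly one block. Counting the points of `V2` gives
`127 = 7 · 16 + #N`, so there are 15 holes; counting the points of a hyperplane `H`, which
meets each block outside it in a line, gives `63 = 7 b + 3 (16 - b) + h`, i.e. `4 b + h = 15`,
where `b` and `h` count the blocks and holes in `H`. Hence `b ≤ 3`, and `b = 0` exactly when `H`
contains all 15 holes, i.e. `⟨N⟩ ≤ H`; so `a₀` is the number `2 ^ (7 - n) - 1` of hyperplanes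
through `⟨N⟩`. Double counting incident (block, hyperplane) pairs, and pairs of distinct blocks
together with a hyperplane containing both (two disjoint planes span a unique hyperplane), gives
`∑ aᵢ = 127`, `∑ i aᵢ = 16 · 15`, `∑ i (i - 1) aᵢ = 16 · 15`, which express `a₁, a₂, a₃` through
`a₀`; then `a₃ = 7 - a₀` forces `2 ^ (7 - n) ≤ 8`, i.e. `n ≥ 4`.
-/

open Finset

namespace Submodule

variable {K M : Type*} [Field K] [AddCommGroup M] [Module K M]

theorem ncard_setOf_finrank_eq_one_le [Finite K] (X : Submodule K M) :
    {P : Submodule K M | finrank K P = 1 ∧ P ≤ X}.ncard =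
      ∑ i ∈ range (finrank K X), Nat.card K ^ i := by
  have himage : {P : Submodule K M | finrank K P = 1 ∧ P ≤ X} =
      map X.subtype '' {P : Submodule K X | finrank K P = 1} := by
    ext P
    constructor
    · rintro ⟨hP, hPX⟩
      have hP' : map X.subtype (comap X.subtype P) = P := by
        rw [map_comap_subtype, inf_eq_right.2 hPX]
      exact ⟨comap X.subtype P, by rwa [Set.mem_ofPred_eq, ← finrank_map_subtype_eq, hP'], hP'⟩
    · rintro ⟨P, hP, rfl⟩
      exact ⟨(finrank_map_subtype_eq X P).trans hP, map_subtype_le X P⟩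
  rw [himage, Set.ncard_image_of_injective _ (map_injective_of_injective X.injective_subtype),
    ← Nat.card_coe_set_eq, Set.coe_ofPred, ← Nat.card_congr (Projectivization.equivSubmodule K X),
    Projectivization.card_of_finrank K X rfl]

/-- Hyperplanes through `W` correspond, via annihilators, to the points of the dual contained in
the annihilator of `W`. -/
theorem ncard_setOf_finrank_eq_ge [Finite K] [FiniteDimensional K M] {n : ℕ}
    (hM : finrank K M = n + 1) (W : Submodule K M) :
    {H : Submodule K M | finrank K H = n ∧ W ≤ H}.ncard =
      ∑ i ∈ range (n + 1 - finrank K W), Nat.card K ^ i := by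
  have hcodim (H : Submodule K M) : finrank K H + finrank K H.dualAnnihilator = n + 1 :=
    hM ▸ Subspace.finrank_add_finrank_dualAnnihilator_eq H
  have himage : dualAnnihilator '' {H : Submodule K M | finrank K H = n ∧ W ≤ H} =
      {P : Submodule K (Dual K M) | finrank K P = 1 ∧ P ≤ W.dualAnnihilator} := by
    ext P
    constructor
    · rintro ⟨H, ⟨hH, hWH⟩, rfl⟩
      exact ⟨by have := hcodim H; omega, Subspace.dualAnnihilator_le_dualAnnihilator_iff.2 hWH⟩
    · rintro ⟨hP, hPW⟩
      refine ⟨P.dualCoannihilator, ⟨?_, ?_⟩, Subspace.dualCoannihilator_dualAnnihilator_eq⟩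
      · have := Subspace.finrank_add_finrank_dualCoannihilator_eq P
        omega
      · rwa [← Subspace.dualAnnihilator_le_dualAnnihilator_iff,
          Subspace.dualCoannihilator_dualAnnihilator_eq]
  rw [← Set.ncard_image_of_injective _ fun _ _ => Subspace.dualAnnihilator_inj.1, himage,
    ncard_setOf_finrank_eq_one_le]
  congr 2
  have := hcodim W
  omega

theorem ncard_setOf_finrank_eq_one_le_zmod_two {M : Type*} [AddCommGroup M] [Module (ZMod 2) M]
    (X : Submodule (ZMod 2) M) :
    {P : Submodule (ZMod 2) M | finrank (ZMod 2) P = 1 ∧ P ≤ X}.ncard =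
      2 ^ finrank (ZMod 2) X - 1 := by
  rw [ncard_setOf_finrank_eq_one_le, Nat.card_zmod, Nat.geomSum_eq le_rfl, Nat.div_one]

theorem finrank_inf_add_one_of_not_le [FiniteDimensional K M] {B H : Submodule K M}
    (hH : finrank K H + 1 = finrank K M) (hBH : ¬B ≤ H) :
    finrank K ↥(B ⊓ H) + 1 = finrank K B := by
  have hsum := finrank_sup_add_finrank_inf_eq B H
  have hsup := finrank_le (B ⊔ H)
  have hinf := finrank_lt_finrank_of_lt (inf_lt_left.2 hBH)
  omega

end Submodule

theorem finrank_V2 : finrank (ZMod 2) V2 = 7 := by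
  simp

noncomputable def hyperplanes : Finset (Submodule (ZMod 2) V2) :=
  {H | finrank (ZMod 2) H = 6}

theorem mem_hyperplanes {H : Submodule (ZMod 2) V2} :
    H ∈ hyperplanes ↔ finrank (ZMod 2) H = 6 := by
  simp [hyperplanes]

theorem ncard_hyperplanes_ge (W : Submodule (ZMod 2) V2) :
    {H : Submodule (ZMod 2) V2 | finrank (ZMod 2) H = 6 ∧ W ≤ H}.ncard =
      2 ^ (7 - finrank (ZMod 2) W) - 1 := by
  rw [Submodule.ncard_setOf_finrank_eq_ge finrank_V2, Nat.card_zmod, Nat.geomSum_eq le_rfl,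
    Nat.div_one]

open scoped Classical in
theorem card_hyperplanes_filter_ge (W : Submodule (ZMod 2) V2) :
    #{H ∈ hyperplanes | W ≤ H} = 2 ^ (7 - finrank (ZMod 2) W) - 1 := by
  rw [← ncard_hyperplanes_ge, ← Set.ncard_coe_finset]
  simp [hyperplanes]

theorem card_hyperplanes : #hyperplanes = 127 := by
  simpa using card_hyperplanes_filter_ge ⊥

theorem holeCount_eq_ncard_iff (S : Set (Submodule (ZMod 2) V2)) (X : Submodule (ZMod 2) V2) :
    holeCount S X = {P | IsHole S P}.ncard ↔ holeSpan S ≤ X := by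
  rw [holeSpan, sSup_le_iff, holeCount]
  constructor
  · intro h P hP
    have hall : {P | IsHole S P ∧ P ≤ X} = {P | IsHole S P} :=
      Set.eq_of_subset_of_ncard_le (fun _ => And.left) h.ge (Set.toFinite _)
    exact (hall.symm ▸ hP : P ∈ {P | IsHole S P ∧ P ≤ X}).2
  · intro h
    congr 1
    ext P
    exact ⟨And.left, fun hP => ⟨hP, h P hP⟩⟩

theorem spec_eq_card_filter (S : Set (Submodule (ZMod 2) V2)) (i : ℕ) :
    spec S i = #{H ∈ hyperplanes | blocksIn S H = i} := by
  rw [spec, ← Set.ncard_coe_finset]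
  simp [hyperplanes]

section Spectrum

variable {S : Set (Submodule (ZMod 2) V2)} {m : ℕ}

theorem sum_spec_mul (hlt : ∀ H ∈ hyperplanes, blocksIn S H < m) (f : ℕ → ℕ) :
    ∑ i ∈ range m, spec S i * f i = ∑ H ∈ hyperplanes, f (blocksIn S H) := by
  rw [← sum_fiberwise_of_maps_to fun H hH => mem_range.2 (hlt H hH)]
  refine sum_congr rfl fun i _ => ?_
  rw [spec_eq_card_filter, ← smul_eq_mul, ← sum_const]
  exact sum_congr rfl fun H hH => by rw [(mem_filter.1 hH).2]

theorem spec_eq_zero_of_le (hlt : ∀ H ∈ hyperplanes, blocksIn S H < m) {i : ℕ} (hi : m ≤ i) :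
    spec S i = 0 := by
  rw [spec_eq_card_filter, card_eq_zero, filter_eq_empty_iff]
  intro H hH
  have := hlt H hH
  omega

end Spectrum

section PartialPlaneSpread

open scoped Classical

variable {S : Finset (Submodule (ZMod 2) V2)}

theorem blocksIn_coe (H : Submodule (ZMod 2) V2) : blocksIn S H = #{B ∈ S | B ≤ H} := by
  rw [blocksIn, ← Set.ncard_coe_finset, coe_filter]
  rfl

/-- Each point of `X` is a hole or lies in exactly one block. -/
theorem IsPPS.sum_add_holeCount (hS : IsPPS S) (X : Submodule (ZMod 2) V2) :
    ∑ B ∈ S, (2 ^ finrank (ZMod 2) ↥(B ⊓ X) - 1) + holeCount S X =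
      2 ^ finrank (ZMod 2) X - 1 := by
  set points : Submodule (ZMod 2) V2 → Set (Submodule (ZMod 2) V2) :=
    fun Y => {P | finrank (ZMod 2) P = 1 ∧ P ≤ Y}
  have hsplit : points X = (⋃ B ∈ (S : Set _), points (B ⊓ X)) ∪ {P | IsHole S P ∧ P ≤ X} := by
    ext P
    simp only [points, IsHole, Set.mem_union, Set.mem_iUnion, le_inf_iff, exists_prop,
      Set.mem_ofPred_eq, SetLike.mem_coe]
    by_cases hP : ∃ B ∈ S, P ≤ B <;> grind
  have hdisj : (S : Set _).PairwiseDisjoint fun B => points (B ⊓ X) := by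
    intro B₁ hB₁ B₂ hB₂ hne
    refine Set.disjoint_left.2 fun P ⟨hP, hP₁⟩ ⟨_, hP₂⟩ => ?_
    have hbot : P ≤ B₁ ⊓ B₂ := le_inf (hP₁.trans inf_le_left) (hP₂.trans inf_le_left)
    rw [hS.2 B₁ hB₁ B₂ hB₂ hne, le_bot_iff] at hbot
    subst hbot
    simp at hP
  have hholes : Disjoint (⋃ B ∈ (S : Set _), points (B ⊓ X)) {P | IsHole S P ∧ P ≤ X} := by
    refine Set.disjoint_left.2 fun P hP ⟨⟨_, hhole⟩, _⟩ => ?_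
    obtain ⟨B, hB, -, hPB⟩ := Set.mem_iUnion₂.1 hP
    exact hhole B hB (hPB.trans inf_le_left)
  rw [holeCount, ← Submodule.ncard_setOf_finrank_eq_one_le_zmod_two]
  change _ = (points X).ncard
  rw [hsplit, Set.ncard_union_eq hholes,
    S.finite_toSet.ncard_biUnion (fun _ _ => Set.toFinite _) hdisj, finsum_mem_coe_finset]
  exact congrArg (· + _) <| sum_congr rfl fun B _ =>
    (Submodule.ncard_setOf_finrank_eq_one_le_zmod_two _).symm

theorem IsPPS.ncard_holes_add (hS : IsPPS S) : {P | IsHole S P}.ncard + 7 * #S = 127 := by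
  have h := hS.sum_add_holeCount ⊤
  rw [sum_const_nat fun B hB => by rw [inf_top_eq, hS.1 B hB]] at h
  simp only [holeCount, le_top, and_true, finrank_top, finrank_V2] at h
  omega

theorem IsPPS.four_mul_blocksIn_add_holeCount (hS : IsPPS S) {H : Submodule (ZMod 2) V2}
    (hH : finrank (ZMod 2) H = 6) : 4 * blocksIn S H + holeCount S H + 3 * #S = 63 := by
  have h := hS.sum_add_holeCount H
  have hsum : ∑ B ∈ S, (2 ^ finrank (ZMod 2) ↥(B ⊓ H) - 1) =
      ∑ B ∈ S, if B ≤ H then 7 else 3 := by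
    refine sum_congr rfl fun B hB => ?_
    split_ifs with hBH
    · rw [inf_eq_left.2 hBH, hS.1 B hB]; rfl
    · have := Submodule.finrank_inf_add_one_of_not_le (by rw [hH, finrank_V2]) hBH
      rw [hS.1 B hB] at this
      rw [show finrank (ZMod 2) ↥(B ⊓ H) = 2 by omega]; rfl
  rw [hsum, sum_ite, sum_const, sum_const, smul_eq_mul, smul_eq_mul, hH, ← blocksIn_coe] at h
  have := card_filter_add_card_filter_not (s := S) (p := fun B => B ≤ H)
  rw [← blocksIn_coe] at this
  omega

theorem IsPPS.sum_blocksIn (hS : IsPPS S) : ∑ H ∈ hyperplanes, blocksIn S H = 15 * #S := by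
  calc ∑ H ∈ hyperplanes, blocksIn S H
      = ∑ H ∈ hyperplanes, #(S.bipartiteBelow (· ≤ ·) H) :=
        sum_congr rfl fun H _ => blocksIn_coe H
    _ = ∑ B ∈ S, #(hyperplanes.bipartiteAbove (· ≤ ·) B) :=
        (sum_card_bipartiteAbove_eq_sum_card_bipartiteBelow _).symm
    _ = 15 * #S := by
        rw [sum_const_nat (m := 15) fun B hB => by
          rw [bipartiteAbove, card_hyperplanes_filter_ge, hS.1 B hB]; rfl, mul_comm]

theorem IsPPS.sum_blocksIn_mul_pred (hS : IsPPS S) :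
    ∑ H ∈ hyperplanes, blocksIn S H * (blocksIn S H - 1) = #S * (#S - 1) := by
  calc ∑ H ∈ hyperplanes, blocksIn S H * (blocksIn S H - 1)
      = ∑ H ∈ hyperplanes, #(S.offDiag.bipartiteBelow (fun p H => p.1 ⊔ p.2 ≤ H) H) := by
        refine sum_congr rfl fun H _ => ?_
        rw [blocksIn_coe, Nat.mul_sub_one, ← offDiag_card, bipartiteBelow]
        congr 1
        ext p
        simp only [mem_offDiag, mem_filter, sup_le_iff]
        tauto
    _ = ∑ p ∈ S.offDiag, #(hyperplanes.bipartiteAbove (fun p H => p.1 ⊔ p.2 ≤ H) p) :=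
        (sum_card_bipartiteAbove_eq_sum_card_bipartiteBelow _).symm
    _ = #S * (#S - 1) := by
        rw [sum_const_nat (m := 1) fun p hp => ?_, mul_one, offDiag_card, Nat.mul_sub_one]
        obtain ⟨h₁, h₂, hne⟩ := mem_offDiag.1 hp
        have hsum := Submodule.finrank_sup_add_finrank_inf_eq p.1 p.2
        rw [hS.2 _ h₁ _ h₂ hne, finrank_bot, add_zero, hS.1 _ h₁, hS.1 _ h₂] at hsum
        rw [bipartiteAbove, card_hyperplanes_filter_ge, hsum]; rfl

end PartialPlaneSpread

theorem spectrum_of_size16_pps (S : Set (Submodule (ZMod 2) V2)) (hS : IsPPS S)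
    (h16 : S.ncard = 16) :
    {P | IsHole S P}.ncard = 15 ∧
    (finrank (ZMod 2) ↥(holeSpan S) = 4 ∨ finrank (ZMod 2) ↥(holeSpan S) = 5 ∨
      finrank (ZMod 2) ↥(holeSpan S) = 6 ∨ finrank (ZMod 2) ↥(holeSpan S) = 7) ∧
    spec S 0 = 2 ^ (7 - finrank (ZMod 2) ↥(holeSpan S)) - 1 ∧
    spec S 0 =
      {H : Submodule (ZMod 2) V2 | finrank (ZMod 2) ↥H = 6 ∧ holeSpan S ≤ H}.ncard ∧
    spec S 1 = 21 - 3 * spec S 0 ∧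
    spec S 2 = 99 + 3 * spec S 0 ∧
    spec S 3 = 7 - spec S 0 ∧
    ∀ i, 4 ≤ i → spec S i = 0 := by
  obtain ⟨S, rfl⟩ := S.toFinite.exists_finset_coe
  rw [Set.ncard_coe_finset] at h16
  have hholes := hS.ncard_holes_add
  have hhyp (H) (hH : H ∈ hyperplanes) := hS.four_mul_blocksIn_add_holeCount (mem_hyperplanes.1 hH)
  have hlt : ∀ H ∈ hyperplanes, blocksIn S H < 4 := fun H hH => by
    have := hhyp H hH
    omega
  have hspec₀ : spec S 0 =
      {H : Submodule (ZMod 2) V2 | finrank (ZMod 2) H = 6 ∧ holeSpan S ≤ H}.ncard := by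
    refine congrArg Set.ncard (Set.ext fun H => and_congr_right fun hH => ?_)
    rw [← holeCount_eq_ncard_iff]
    have := hhyp H (mem_hyperplanes.2 hH)
    omega
  have hcount := sum_spec_mul hlt fun _ => 1
  have hincidences := sum_spec_mul hlt fun i => i
  have hpairs := sum_spec_mul hlt fun i => i * (i - 1)
  rw [sum_const, smul_eq_mul, mul_one, card_hyperplanes] at hcount
  rw [hS.sum_blocksIn, h16] at hincidences
  rw [hS.sum_blocksIn_mul_pred, h16] at hpairs
  simp only [sum_range_succ, sum_range_zero] at hcount hincidences hpairs
  have hdim := Submodule.finrank_le (holeSpan S)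
  rw [finrank_V2] at hdim
  have hspec₀' := hspec₀.trans (ncard_hyperplanes_ge _)
  have hdim₄ : 4 ≤ finrank (ZMod 2) (holeSpan S) := by
    by_contra! hlt₄
    have := Nat.pow_le_pow_right two_pos (show 4 ≤ 7 - finrank (ZMod 2) (holeSpan S) by omega)
    omega
  refine ⟨by omega, by omega, hspec₀', hspec₀, by omega, by omega,
    by omega, fun i hi => spec_eq_zero_of_le hlt hi⟩
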